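/- arXiv:2411.04898 — 3 statements merged into one kernel-verified Lean document; each statement's English description precedes it below -/
import Mathlib

section
/- KAK equivalences of two-qubit Pauli rotations: for all real k_x, k_y, k_z, writing E(k_x,k_y,k_z) = exp( i·(k_x·(X⊗X) + k_y·(Y⊗Y) + k_z·(Z⊗Z)) ), the following three identities hold: (i) E(k_x + π/2, k_y, k_z) = ((i·X) ⊗ X) · E(k_x,k_y,k_z); (ii) E(−k_x, −k_y, k_z) = (Z ⊗ 1) · E(k_x,k_y,k_z) · (Z ⊗ 1); (iii) E(k_z, k_y, k_x) = (H ⊗ H) · E(k_x,k_y,k_z) · (H ⊗ H), where H = (1/√2)·!![1,1;1,−1]. In particular, shifting one KAK coefficient by π/2, reversing the signs of a pair of coefficients, or swapping a pair of coefficients yields a unitary that differs from the original only by left and right multiplication by tensor products of single-qubit unitaries (KAK equivalence). -/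
open Matrix Kronecker

/-- The Pauli `X` matrix. -/
noncomputable def PauliX : Matrix (Fin 2) (Fin 2) ℂ := !![0, 1; 1, 0]

/-- The Pauli `Y` matrix. -/
noncomputable def PauliY : Matrix (Fin 2) (Fin 2) ℂ := !![0, -Complex.I; Complex.I, 0]

/-- The Pauli `Z` matrix. -/
noncomputable def PauliZ : Matrix (Fin 2) (Fin 2) ℂ := !![1, 0; 0, -1]

/-- The Hadamard matrix `H = (1/√2)·!![1,1;1,−1]`. -/
noncomputable def Hadamard : Matrix (Fin 2) (Fin 2) ℂ :=
  (1 / (Real.sqrt 2 : ℂ)) • !![1, 1; 1, -1]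

/-- `E(kx,ky,kz) = exp(i(kx X⊗X + ky Y⊗Y + kz Z⊗Z))`, the two-qubit Pauli rotation
with KAK coefficients `kx, ky, kz`. -/
noncomputable def Egate (kx ky kz : ℝ) : Matrix (Fin 2 × Fin 2) (Fin 2 × Fin 2) ℂ :=
  NormedSpace.exp (Complex.I •
    ((kx : ℂ) • (PauliX ⊗ₖ PauliX) + (ky : ℂ) • (PauliY ⊗ₖ PauliY) +
      (kz : ℂ) • (PauliZ ⊗ₖ PauliZ)))

/-! Conjugating the generator `kx X⊗X + ky Y⊗Y + kz Z⊗Z` by the involutions `Z ⊗ 1` and `H ⊗ H`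
negates or permutes its three Pauli terms, and the exponential commutes with conjugation. For the
shift, `X⊗X` commutes with the generator (in each tensor factor `X` anticommutes with `Y` and
with `Z`), so `exp` splits off `exp (iπ/2 · X⊗X)`, which equals
`cos (π/2) + i sin (π/2) · X⊗X = i · X⊗X` because `X⊗X` squares to the identity. -/

open NormedSpace

section InvolutionExp

variable {𝔸 : Type*} [Ring 𝔸] [Algebra ℂ 𝔸] [TopologicalSpace 𝔸] [IsTopologicalRing 𝔸]
  [ContinuousSMul ℂ 𝔸] [T2Space 𝔸]

theorem exp_smul_of_mul_self_eq_one {P : 𝔸} (hP : P * P = 1) (c : ℂ) :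
    exp (c • P) = Complex.cosh c • (1 : 𝔸) + Complex.sinh c • P := by
  have hP2 : P ^ 2 = 1 := by rw [sq, hP]
  rw [exp_eq_tsum ℂ]
  refine HasSum.tsum_eq (HasSum.even_add_odd ?_ ?_)
  · convert (Complex.hasSum_cosh c).smul_const (1 : 𝔸) using 2 with n
    rw [smul_pow, pow_mul P, hP2, one_pow, smul_smul, div_eq_inv_mul]
  · convert (Complex.hasSum_sinh c).smul_const P using 2 with n
    rw [smul_pow, pow_succ P, pow_mul P, hP2, one_pow, one_mul, smul_smul, div_eq_inv_mul]

theorem exp_I_mul_pi_div_two_smul {P : 𝔸} (hP : P * P = 1) :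
    exp ((Complex.I * (Real.pi / 2 : ℝ)) • P) = Complex.I • P := by
  rw [exp_smul_of_mul_self_eq_one hP, mul_comm, Complex.cosh_mul_I, Complex.sinh_mul_I,
    ← Complex.ofReal_cos, ← Complex.ofReal_sin, Real.cos_pi_div_two, Real.sin_pi_div_two]
  simp

end InvolutionExp

theorem Matrix.exp_conj_of_mul_self_eq_one {m 𝔸 : Type*} [Fintype m] [DecidableEq m]
    [NormedRing 𝔸] [NormedAlgebra ℚ 𝔸] [CompleteSpace 𝔸] {P : Matrix m m 𝔸} (hP : P * P = 1)
    (A : Matrix m m 𝔸) : exp (P * A * P) = P * exp A * P :=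
  Matrix.exp_units_conj ⟨P, P, hP, hP⟩ A

section Kronecker

variable {m n R : Type*} [CommRing R]

theorem Matrix.neg_kronecker (A : Matrix m m R) (B : Matrix n n R) : (-A) ⊗ₖ B = -(A ⊗ₖ B) := by
  ext; simp

theorem Matrix.kronecker_neg (A : Matrix m m R) (B : Matrix n n R) : A ⊗ₖ (-B) = -(A ⊗ₖ B) := by
  ext; simp

theorem Matrix.commute_kronecker_of_anticommute [Fintype m] [Fintype n]
    {A B : Matrix m m R} {C D : Matrix n n R}
    (hAB : A * B = -(B * A)) (hCD : C * D = -(D * C)) : Commute (A ⊗ₖ C) (B ⊗ₖ D) := by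
  rw [Commute, SemiconjBy, ← mul_kronecker_mul, ← mul_kronecker_mul, hAB, hCD, neg_kronecker,
    kronecker_neg, neg_neg]

theorem Matrix.kronecker_mul_self_eq_one [Fintype m] [Fintype n] [DecidableEq m] [DecidableEq n]
    {A : Matrix m m R} {B : Matrix n n R} (hA : A * A = 1) (hB : B * B = 1) :
    (A ⊗ₖ B) * (A ⊗ₖ B) = 1 := by
  rw [← mul_kronecker_mul, hA, hB, one_kronecker_one]

end Kronecker

theorem ofReal_sqrt_two_sq : (Real.sqrt 2 : ℂ) ^ 2 = 2 := by
  rw [← Complex.ofReal_pow, Real.sq_sqrt zero_le_two, Complex.ofReal_ofNat]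

theorem pauliX_mul_self : PauliX * PauliX = 1 := by
  simp [PauliX, one_fin_two]

theorem pauliZ_mul_self : PauliZ * PauliZ = 1 := by
  simp [PauliZ, one_fin_two]

theorem pauliX_mul_pauliY : PauliX * PauliY = -(PauliY * PauliX) := by
  simp [PauliX, PauliY]

theorem pauliX_mul_pauliZ : PauliX * PauliZ = -(PauliZ * PauliX) := by
  simp [PauliX, PauliZ]

theorem pauliZ_mul_pauliX_mul_pauliZ : PauliZ * PauliX * PauliZ = -PauliX := by
  simp [PauliX, PauliZ]

theorem pauliZ_mul_pauliY_mul_pauliZ : PauliZ * PauliY * PauliZ = -PauliY := by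
  simp [PauliY, PauliZ]

theorem hadamard_mul_mul_hadamard (A : Matrix (Fin 2) (Fin 2) ℂ) :
    Hadamard * A * Hadamard = (2⁻¹ : ℂ) • (!![1, 1; 1, -1] * A * !![1, 1; 1, -1]) := by
  rw [Hadamard, Matrix.smul_mul, Matrix.smul_mul, Matrix.mul_smul, smul_smul, ← sq, div_pow,
    ofReal_sqrt_two_sq, one_pow, one_div]

theorem hadamard_mul_self : Hadamard * Hadamard = 1 := by
  have h := hadamard_mul_mul_hadamard 1
  rw [Matrix.mul_one] at h
  rw [h, one_fin_two]
  norm_num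

theorem hadamard_mul_pauliX_mul_hadamard : Hadamard * PauliX * Hadamard = PauliZ := by
  norm_num [hadamard_mul_mul_hadamard, PauliX, PauliZ]

theorem hadamard_mul_pauliY_mul_hadamard : Hadamard * PauliY * Hadamard = -PauliY := by
  norm_num [hadamard_mul_mul_hadamard, PauliY]
  constructor <;> ring

theorem hadamard_mul_pauliZ_mul_hadamard : Hadamard * PauliZ * Hadamard = PauliX := by
  norm_num [hadamard_mul_mul_hadamard, PauliX, PauliZ]

noncomputable def kakGenerator (kx ky kz : ℝ) : Matrix (Fin 2 × Fin 2) (Fin 2 × Fin 2) ℂ :=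
  (kx : ℂ) • (PauliX ⊗ₖ PauliX) + (ky : ℂ) • (PauliY ⊗ₖ PauliY) + (kz : ℂ) • (PauliZ ⊗ₖ PauliZ)

theorem egate_eq_exp_kakGenerator (kx ky kz : ℝ) :
    Egate kx ky kz = exp (Complex.I • kakGenerator kx ky kz) :=
  rfl

theorem kronecker_conj_kakGenerator (V W : Matrix (Fin 2) (Fin 2) ℂ) (kx ky kz : ℝ) :
    (V ⊗ₖ W) * kakGenerator kx ky kz * (V ⊗ₖ W) =
      (kx : ℂ) • ((V * PauliX * V) ⊗ₖ (W * PauliX * W)) +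
        (ky : ℂ) • ((V * PauliY * V) ⊗ₖ (W * PauliY * W)) +
        (kz : ℂ) • ((V * PauliZ * V) ⊗ₖ (W * PauliZ * W)) := by
  simp only [kakGenerator, Matrix.mul_add, Matrix.add_mul, Matrix.mul_smul, Matrix.smul_mul,
    ← mul_kronecker_mul]

theorem egate_eq_conj {V : Matrix (Fin 2 × Fin 2) (Fin 2 × Fin 2) ℂ} (hV : V * V = 1)
    {kx ky kz kx' ky' kz' : ℝ} (h : V * kakGenerator kx ky kz * V = kakGenerator kx' ky' kz') :
    Egate kx' ky' kz' = V * Egate kx ky kz * V := by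
  rw [egate_eq_exp_kakGenerator, egate_eq_exp_kakGenerator,
    ← Matrix.exp_conj_of_mul_self_eq_one hV, Matrix.mul_smul, Matrix.smul_mul, h]

theorem egate_neg_neg (kx ky kz : ℝ) :
    Egate (-kx) (-ky) kz =
      (PauliZ ⊗ₖ (1 : Matrix (Fin 2) (Fin 2) ℂ)) * Egate kx ky kz *
        (PauliZ ⊗ₖ (1 : Matrix (Fin 2) (Fin 2) ℂ)) := by
  refine egate_eq_conj ?_ ?_
  · exact kronecker_mul_self_eq_one pauliZ_mul_self (Matrix.one_mul 1)
  · rw [kronecker_conj_kakGenerator]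
    simp only [pauliZ_mul_pauliX_mul_pauliZ, pauliZ_mul_pauliY_mul_pauliZ, pauliZ_mul_self,
      Matrix.mul_one, Matrix.one_mul, neg_kronecker, kakGenerator]
    push_cast
    module

theorem egate_swap (kx ky kz : ℝ) :
    Egate kz ky kx = (Hadamard ⊗ₖ Hadamard) * Egate kx ky kz * (Hadamard ⊗ₖ Hadamard) := by
  refine egate_eq_conj ?_ ?_
  · exact kronecker_mul_self_eq_one hadamard_mul_self hadamard_mul_self
  · rw [kronecker_conj_kakGenerator, hadamard_mul_pauliX_mul_hadamard,
      hadamard_mul_pauliY_mul_hadamard, hadamard_mul_pauliZ_mul_hadamard, neg_kronecker,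
      kronecker_neg, neg_neg, kakGenerator]
    abel

theorem commute_pauliX_kronecker_pauliX_kakGenerator (kx ky kz : ℝ) :
    Commute (PauliX ⊗ₖ PauliX) (kakGenerator kx ky kz) :=
  (((Commute.refl _).smul_right _).add_right
    ((commute_kronecker_of_anticommute pauliX_mul_pauliY pauliX_mul_pauliY).smul_right _)).add_right
    ((commute_kronecker_of_anticommute pauliX_mul_pauliZ pauliX_mul_pauliZ).smul_right _)

theorem egate_add_pi_div_two (kx ky kz : ℝ) :
    Egate (kx + Real.pi / 2) ky kz = ((Complex.I • PauliX) ⊗ₖ PauliX) * Egate kx ky kz := by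
  have hsplit : Complex.I • kakGenerator (kx + Real.pi / 2) ky kz =
      (Complex.I * (Real.pi / 2 : ℝ)) • (PauliX ⊗ₖ PauliX) + Complex.I • kakGenerator kx ky kz := by
    simp only [kakGenerator]
    push_cast
    module
  rw [egate_eq_exp_kakGenerator, egate_eq_exp_kakGenerator, hsplit,
    Matrix.exp_add_of_commute _ _
      (((commute_pauliX_kronecker_pauliX_kakGenerator kx ky kz).smul_right _).smul_left _),
    exp_I_mul_pi_div_two_smul (kronecker_mul_self_eq_one pauliX_mul_self pauliX_mul_self),
    smul_kronecker]

/-- **KAK equivalences of two-qubit Pauli rotations**: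
(i) shifting `kx` by `π/2` multiplies `E` on the left by `(i·X) ⊗ X`;
(ii) reversing the signs of `kx, ky` conjugates `E` by `Z ⊗ 1`;
(iii) swapping `kx` and `kz` conjugates `E` by `H ⊗ H`.
Hence these operations yield KAK-equivalent unitaries. -/
theorem KAK_equivalences (kx ky kz : ℝ) :
    Egate (kx + Real.pi / 2) ky kz = ((Complex.I • PauliX) ⊗ₖ PauliX) * Egate kx ky kz ∧
    Egate (-kx) (-ky) kz =
      (PauliZ ⊗ₖ (1 : Matrix (Fin 2) (Fin 2) ℂ)) * Egate kx ky kz *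
        (PauliZ ⊗ₖ (1 : Matrix (Fin 2) (Fin 2) ℂ)) ∧
    Egate kz ky kx = (Hadamard ⊗ₖ Hadamard) * Egate kx ky kz * (Hadamard ⊗ₖ Hadamard) :=
  ⟨egate_add_pi_div_two kx ky kz, egate_neg_neg kx ky kz, egate_swap kx ky kz⟩
end

section
/- Key algebraic step in the proof that no gadget forms an exact 4-design (Theorem prop:chi): for all real k_x, k_y, k_z, if f₁(k_x,k_y,k_z) = −3/5, f₂(k_x,k_y,k_z) = 0, and f₃(k_x,k_y,k_z) = 0, then the multiset {cos(4k_x), cos(4k_y), cos(4k_z)} equals {√(3/5), −√(3/5), 0}. -/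
private lemma pair_key (y z : ℝ) (hs : y + z = 0) (hp : y * z = -3/5) :
    ({y, z} : Multiset ℝ) = {Real.sqrt (3/5), -Real.sqrt (3/5)} := by
  set a := Real.sqrt (3/5) with ha
  have ha2 : a ^ 2 = 3/5 := Real.sq_sqrt (by norm_num)
  have hz : z = -y := by linarith
  rw [hz] at hp
  have hy2 : y ^ 2 = 3/5 := by nlinarith [hp]
  have : (y - a) * (y + a) = 0 := by nlinarith
  rcases mul_eq_zero.1 this with h | h
  · have hy : y = a := by linarith
    subst hz; rw [hy]
  · have hy : y = -a := by linarith
    subst hz; rw [hy, neg_neg]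
    exact Multiset.cons_swap _ _ _

private lemma key (x y z : ℝ)
    (h1 : x * (2 + y) + y * (2 + z) + z * (2 + x) = -3/5)
    (h2 : x * y * z - (x + y + z) = 0)
    (h3 : x + y + z = 0) :
    ({x, y, z} : Multiset ℝ) = {Real.sqrt (3/5), -Real.sqrt (3/5), 0} := by
  have hprod : x * y * z = 0 := by linarith
  have hsym : x*y + y*z + z*x = -3/5 := by nlinarith
  rcases mul_eq_zero.1 hprod with h | hz0
  · rcases mul_eq_zero.1 h with hx0 | hy0
    · subst hx0
      have := pair_key y z (by linarith) (by nlinarith)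
      calc ({0, y, z} : Multiset ℝ) = {y, z, 0} := by
            refine (Multiset.cons_swap _ _ _).trans ?_
            congr 1
            exact Multiset.cons_swap _ _ _
        _ = {Real.sqrt (3/5), -Real.sqrt (3/5), 0} := by
            rw [show ({y, z, 0} : Multiset ℝ) = {y, z} + {0} from rfl, this]; rfl
    · subst hy0
      have := pair_key x z (by linarith) (by nlinarith)
      calc ({x, 0, z} : Multiset ℝ) = {x, z, 0} := by
            congr 1
            exact Multiset.cons_swap _ _ _
        _ = {Real.sqrt (3/5), -Real.sqrt (3/5), 0} := by
            rw [show ({x, z, 0} : Multiset ℝ) = {x, z} + {0} from rfl, this]; rfl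
  · subst hz0
    have := pair_key x y (by linarith) (by nlinarith)
    rw [show ({x, y, 0} : Multiset ℝ) = {x, y} + {0} from rfl, this]; rfl

/-- **Key algebraic step in the proof that no gadget forms an exact 4-design**:
writing `x = cos(4kx)`, `y = cos(4ky)`, `z = cos(4kz)`, if
`f₁ = x(2+y) + y(2+z) + z(2+x) = −3/5`, `f₂ = xyz − (x+y+z) = 0` and `f₃ = x+y+z = 0`,
then the multiset `{x, y, z}` equals `{√(3/5), −√(3/5), 0}`. -/
theorem no_exact_four_design_key (kx ky kz : ℝ)
    (h1 : Real.cos (4*kx) * (2 + Real.cos (4*ky)) + Real.cos (4*ky) * (2 + Real.cos (4*kz)) +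
      Real.cos (4*kz) * (2 + Real.cos (4*kx)) = -3/5)
    (h2 : Real.cos (4*kx) * Real.cos (4*ky) * Real.cos (4*kz) -
      (Real.cos (4*kx) + Real.cos (4*ky) + Real.cos (4*kz)) = 0)
    (h3 : Real.cos (4*kx) + Real.cos (4*ky) + Real.cos (4*kz) = 0) :
    ({Real.cos (4*kx), Real.cos (4*ky), Real.cos (4*kz)} : Multiset ℝ) =
      {Real.sqrt (3/5), -Real.sqrt (3/5), 0} := by
  exact key _ _ _ h1 h2 h3
end

section
/- Lemma (minimality of the iSWAP parameter a): for all real k_x, k_y, k_z, the quantity a(k_x,k_y,k_z) = (1/9)(6 + cos(4k_x)cos(4k_y) + cos(4k_x)cos(4k_z) + cos(4k_y)cos(4k_z)) satisfies a(k_x,k_y,k_z) ≥ 5/9, and equality holds at (k_x,k_y,k_z) = (π/4, π/4, 0), the KAK coefficients of the iSWAP gate. -/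
/-- The parameter `a(kx,ky,kz)` of the second-moment matrix of the ironed gadget built from
a two-qubit gate with KAK coefficients `(kx,ky,kz)`. -/
noncomputable def aKAK (kx ky kz : ℝ) : ℝ :=
  (1/9) * (6 + Real.cos (4*kx) * Real.cos (4*ky) + Real.cos (4*kx) * Real.cos (4*kz) +
    Real.cos (4*ky) * Real.cos (4*kz))

/-- **Minimality of the iSWAP parameter `a`**: for all real KAK coefficients,
`a(kx,ky,kz) ≥ 5/9`, with equality at the iSWAP coefficients `(π/4, π/4, 0)`. -/
theorem aKAK_ge_iSWAP (kx ky kz : ℝ) :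
    5/9 ≤ aKAK kx ky kz ∧ aKAK (Real.pi/4) (Real.pi/4) 0 = 5/9 := by
  constructor
  · have hx1 := Real.neg_one_le_cos (4*kx)
    have hx2 := Real.cos_le_one (4*kx)
    have hy1 := Real.neg_one_le_cos (4*ky)
    have hy2 := Real.cos_le_one (4*ky)
    have hz1 := Real.neg_one_le_cos (4*kz)
    have hz2 := Real.cos_le_one (4*kz)
    unfold aKAK
    nlinarith [mul_nonneg (mul_nonneg (by linarith : (0:ℝ) ≤ 1 + Real.cos (4*kx)) (by linarith : (0:ℝ) ≤ 1 + Real.cos (4*ky))) (by linarith : (0:ℝ) ≤ 1 + Real.cos (4*kz)),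
      mul_nonneg (mul_nonneg (by linarith : (0:ℝ) ≤ 1 - Real.cos (4*kx)) (by linarith : (0:ℝ) ≤ 1 - Real.cos (4*ky))) (by linarith : (0:ℝ) ≤ 1 - Real.cos (4*kz))]
  · have h : (4 : ℝ) * (Real.pi/4) = Real.pi := by ring
    simp [aKAK, h, Real.cos_pi]
    ring
end
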